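/- The tridiagonal matrix H of the previous statement satisfies the characteristic identity: its spectrum is the set {M·|B| : M ∈ ℤ, -J ≤ M ≤ J} where |B|² = z² + (x²+y²)/4; equivalently, the characteristic polynomial of H equals ∏_{M=-J}^{J}(λ - M|B|). -/

import Mathlib

open Complex Polynomial

/-- The `(2J+1)×(2J+1)` tridiagonal matrix of `B·L` in the spin-`J` representation,
indexed by `i, j : Fin (2J+1)` with `M = i - J ∈ {-J,…,J}`. -/
noncomputable def BdotL (J : ℕ) (x y z : ℝ) :
    Matrix (Fin (2 * J + 1)) (Fin (2 * J + 1)) ℂ := fun i j =>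
  let M : ℤ := (i : ℤ) - (J : ℤ)
  if (j : ℤ) = (i : ℤ) - 1 then
    -(((x : ℂ) - Complex.I * y) / 4) *
      Real.sqrt (((J : ℝ) - (M : ℝ) + 1) * ((J : ℝ) + (M : ℝ)))
  else if j = i then (z : ℂ) * (M : ℂ)
  else if (j : ℤ) = (i : ℤ) + 1 then
    -(((x : ℂ) + Complex.I * y) / 4) *
      Real.sqrt (((J : ℝ) + (M : ℝ) + 1) * ((J : ℝ) - (M : ℝ)))
  else 0

/-!
Realise the spin-`J` representation on polynomials of degree `≤ 2J`: after rescaling the basis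
vectors by `√(2J choose i)`, `BdotL` becomes the matrix whose `k`-th row lists the coefficients
of `L (X ^ k)`, for the first-order differential operator `L = (β + z X - α X²) ∂ + J (2α X - z)`
with `α = -(x + i y)/4` and `β = -(x - i y)/4`. Substituting `X ↦ X + c` for a root `c` of
`β + z X - α X²` conjugates `L` into an operator mapping `X ^ k` into `X ^ k ℂ[X]`, whose matrix
is therefore triangular with diagonal `(k - J) μ`, `μ = z - 2αc`. Finally `μ² = z² + 4αβ = |B|²`,
and the sign of `μ` is irrelevant because `{-J, …, J}` is symmetric.
-/

namespace Polynomial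

variable {R : Type*} [CommRing R]

noncomputable def firstOrderOp (a b : R[X]) : R[X] →ₗ[R] R[X] :=
  LinearMap.mulLeft R a ∘ₗ derivative + LinearMap.mulLeft R b

theorem firstOrderOp_apply (a b p : R[X]) :
    firstOrderOp a b p = a * derivative p + b * p := rfl

theorem derivative_taylor (r : R) (p : R[X]) :
    derivative (taylor r p) = taylor r (derivative p) := by
  simp [taylor_apply, derivative_comp]

theorem taylor_firstOrderOp (r : R) (a b p : R[X]) :
    taylor r (firstOrderOp a b p) = firstOrderOp (taylor r a) (taylor r b) (taylor r p) := by
  simp only [firstOrderOp_apply, map_add, taylor_mul, derivative_taylor]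

theorem X_mul_derivative_X_pow (n : ℕ) : X * derivative (X ^ n : R[X]) = C (n : R) * X ^ n := by
  cases n with
  | zero => simp
  | succ n => rw [derivative_X_pow, Nat.add_sub_cancel]; ring

theorem firstOrderOp_X_pow_of_coeff_zero {a : R[X]} (ha : a.coeff 0 = 0) (b : R[X]) (k : ℕ) :
    firstOrderOp a b (X ^ k) = (C (k : R) * divX a + b) * X ^ k := by
  have hX : a = divX a * X := by simpa [ha] using (divX_mul_X_add a).symm
  calc firstOrderOp a b (X ^ k) = divX a * (X * derivative (X ^ k)) + b * X ^ k := by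
        rw [firstOrderOp_apply]; nth_rw 1 [hX]; ring
    _ = (C (k : R) * divX a + b) * X ^ k := by rw [X_mul_derivative_X_pow]; ring

end Polynomial

namespace Matrix

variable {R : Type*} [CommRing R]

theorem charpoly_eq_of_mul_eq_mul {m : Type*} [Fintype m] [DecidableEq m] {M T P Q : Matrix m m R}
    (hQP : Q * P = 1) (h : M * P = P * T) : M.charpoly = T.charpoly := by
  have hT : T = Q * M * P := by rw [mul_assoc, h, ← mul_assoc, hQP, one_mul]
  rw [hT, charpoly_mul_comm, ← mul_assoc, mul_eq_one_comm.mp hQP, one_mul]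

variable {n : ℕ}

def ofCoeffRows (p : Fin n → R[X]) : Matrix (Fin n) (Fin n) R := of fun i j => (p i).coeff j

theorem ofCoeffRows_mul_ofCoeffRows_map (L : R[X] →ₗ[R] R[X]) {p : Fin n → R[X]}
    (hp : ∀ i, (p i).natDegree < n) :
    ofCoeffRows p * ofCoeffRows (fun k => L (X ^ (k : ℕ))) = ofCoeffRows (fun i => L (p i)) := by
  ext i j
  have hsum : p i = ∑ k : Fin n, (p i).coeff k • X ^ (k : ℕ) := by
    rw [Fin.sum_univ_eq_sum_range (fun k => (p i).coeff k • X ^ k)]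
    simp_rw [smul_X_eq_monomial]
    exact as_sum_range' _ _ (hp i)
  have hL : L (p i) = ∑ k : Fin n, (p i).coeff k • L (X ^ (k : ℕ)) := by
    conv_lhs => rw [hsum]
    simp only [map_sum, map_smul]
  simp [mul_apply, ofCoeffRows, hL]

theorem ofCoeffRows_X_pow : ofCoeffRows (fun i : Fin n => (X : R[X]) ^ (i : ℕ)) = 1 := by
  ext i j
  simp [ofCoeffRows, coeff_X_pow, one_apply, Fin.val_eq_val, eq_comm]

theorem charpoly_ofCoeffRows_of_coeff_eq_zero {p : Fin n → R[X]}
    (hp : ∀ i j : Fin n, j < i → (p i).coeff j = 0) :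
    (ofCoeffRows p).charpoly = ∏ i, (X - C ((p i).coeff i)) :=
  charpoly_of_isUpperTriangular _ fun i j h => hp i j h

theorem charpoly_ofCoeffRows_firstOrderOp {a b : R[X]}
    (hdeg : ∀ k < n, (firstOrderOp a b (X ^ k)).natDegree < n) {r : R} (hr : a.IsRoot r) :
    (ofCoeffRows fun k : Fin n => firstOrderOp a b (X ^ (k : ℕ))).charpoly =
      ∏ k : Fin n, (X - C (k * a.derivative.eval r + b.eval r)) := by
  have hdeg_taylor (s : R) (k : Fin n) : (taylor s (X ^ (k : ℕ))).natDegree < n := by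
    rw [natDegree_taylor]
    exact (natDegree_X_pow_le _).trans_lt k.isLt
  have hinv : ofCoeffRows (fun k : Fin n => taylor (-r) (X ^ (k : ℕ))) *
      ofCoeffRows (fun k : Fin n => taylor r (X ^ (k : ℕ))) = 1 := by
    rw [ofCoeffRows_mul_ofCoeffRows_map _ (hdeg_taylor _)]
    simp [ofCoeffRows_X_pow]
  have hconj : (ofCoeffRows fun k : Fin n => firstOrderOp a b (X ^ (k : ℕ))) *
      ofCoeffRows (fun k : Fin n => taylor r (X ^ (k : ℕ))) =
      ofCoeffRows (fun k : Fin n => taylor r (X ^ (k : ℕ))) *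
      ofCoeffRows fun k : Fin n => firstOrderOp (taylor r a) (taylor r b) (X ^ (k : ℕ)) := by
    rw [ofCoeffRows_mul_ofCoeffRows_map _ fun k => hdeg k k.isLt,
      ofCoeffRows_mul_ofCoeffRows_map _ (hdeg_taylor r)]
    simp only [taylor_firstOrderOp]
  have ha : (taylor r a).coeff 0 = 0 := by rwa [taylor_coeff_zero]
  rw [charpoly_eq_of_mul_eq_mul hinv hconj, charpoly_ofCoeffRows_of_coeff_eq_zero]
  · simp [firstOrderOp_X_pow_of_coeff_zero ha, coeff_mul_X_pow', coeff_divX, taylor_coeff_one,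
      taylor_coeff_zero]
  · intro i j hji
    rw [firstOrderOp_X_pow_of_coeff_zero ha, coeff_mul_X_pow', if_neg (by simpa using hji)]

end Matrix

section Spin

variable {R : Type*} [CommRing R] (J : ℕ) (β z α : R)

noncomputable def spinOp : R[X] →ₗ[R] R[X] :=
  firstOrderOp (C (-α) * X ^ 2 + C z * X + C β) (C (2 * J * α) * X - C (J * z))

theorem spinOp_X_pow (k : ℕ) :
    spinOp J β z α (X ^ k) =
      C (β * k) * X ^ (k - 1) + C (z * (k - J)) * X ^ k + C (α * (2 * J - k)) * X ^ (k + 1) := by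
  cases k with
  | zero => simp [spinOp, firstOrderOp_apply]; ring
  | succ k =>
    simp only [spinOp, firstOrderOp_apply, derivative_X_pow, Nat.add_sub_cancel, map_mul, map_sub,
      map_neg, map_natCast, C_ofNat]
    push_cast
    ring

theorem coeff_spinOp_X_pow (k j : ℕ) :
    (spinOp J β z α (X ^ k)).coeff j =
      if j + 1 = k then β * k
      else if j = k then z * (k - J)
      else if j = k + 1 then α * (2 * J - k)
      else 0 := by
  rw [spinOp_X_pow]
  simp only [coeff_add, coeff_C_mul_X_pow]
  split_ifs <;> first | omega | simp [show k = 0 by omega] | simp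

theorem natDegree_spinOp_X_pow_lt {k : ℕ} (hk : k < 2 * J + 1) :
    (spinOp J β z α (X ^ k)).natDegree < 2 * J + 1 := by
  rw [Nat.lt_succ_iff, natDegree_le_iff_coeff_eq_zero]
  intro j hj
  rw [coeff_spinOp_X_pow]
  split_ifs
  · omega
  · omega
  · rw [show k = 2 * J by omega]
    push_cast
    ring
  · rfl

noncomputable def spinMatrix : Matrix (Fin (2 * J + 1)) (Fin (2 * J + 1)) R :=
  Matrix.ofCoeffRows fun k => spinOp J β z α (X ^ (k : ℕ))

theorem charpoly_spinMatrix {c : R} (hc : (C (-α) * X ^ 2 + C z * X + C β).IsRoot c) :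
    (spinMatrix J β z α).charpoly =
      ∏ k : Fin (2 * J + 1), (X - C ((z - 2 * α * c) * (k - J))) := by
  rw [spinMatrix, spinOp, Matrix.charpoly_ofCoeffRows_firstOrderOp
    (fun k hk => natDegree_spinOp_X_pow_lt J β z α hk) hc]
  congr 1
  funext k
  congr 2
  simp
  ring

end Spin

theorem Real.sqrt_mul_sqrt_eq_of_mul_eq {a b p q : ℝ} (hp : 0 ≤ p) (hq : 0 ≤ q)
    (h : a * p = b * q) : √(p * q) * √a = √b * q := by
  calc √(p * q) * √a = √(b * q ^ 2) := by
        rw [← Real.sqrt_mul (mul_nonneg hp hq)]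
        congr 1
        linear_combination q * h
    _ = √b * q := by rw [Real.sqrt_mul' _ (sq_nonneg q), Real.sqrt_sq hq]

theorem Real.sqrt_mul_sqrt_choose_succ (n k : ℕ) :
    √(((k + 1 : ℕ) : ℝ) * (n - k : ℕ)) * √(n.choose (k + 1)) = √(n.choose k) * (n - k : ℕ) :=
  Real.sqrt_mul_sqrt_eq_of_mul_eq (by positivity) (by positivity)
    (by exact_mod_cast Nat.choose_succ_right_eq n k)

theorem Real.sqrt_mul_sqrt_choose (n k : ℕ) :
    √(((n - k : ℕ) : ℝ) * (k + 1 : ℕ)) * √(n.choose k) = √(n.choose (k + 1)) * (k + 1 : ℕ) :=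
  Real.sqrt_mul_sqrt_eq_of_mul_eq (by positivity) (by positivity)
    (by exact_mod_cast (Nat.choose_succ_right_eq n k).symm)

theorem BdotL_mul_diagonal (J : ℕ) (x y z : ℝ) :
    BdotL J x y z * Matrix.diagonal (fun i : Fin (2 * J + 1) => (√((2 * J).choose i) : ℂ)) =
      Matrix.diagonal (fun i : Fin (2 * J + 1) => (√((2 * J).choose i) : ℂ)) *
        spinMatrix J (-((x : ℂ) - I * y) / 4) z (-((x : ℂ) + I * y) / 4) := by
  ext i j
  rw [Matrix.mul_diagonal, Matrix.diagonal_mul, spinMatrix, Matrix.ofCoeffRows, Matrix.of_apply,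
    coeff_spinOp_X_pow]
  simp only [BdotL]
  split_ifs <;> try omega
  · have hsub : (j : ℕ) + 1 = i := by omega
    have harg : ((J : ℝ) - (((i : ℤ) - J : ℤ) : ℝ) + 1) * (J + (((i : ℤ) - J : ℤ) : ℝ)) =
        ((2 * J - j : ℕ) : ℝ) * ((j + 1 : ℕ) : ℝ) := by
      rw [Nat.cast_sub (by omega), ← hsub]
      push_cast
      ring
    have hsqrt := congrArg ((↑) : ℝ → ℂ) (Real.sqrt_mul_sqrt_choose (2 * J) j)
    rw [harg, ← hsub]
    push_cast at hsqrt ⊢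
    linear_combination (-((x : ℂ) - I * y) / 4) * hsqrt
  · rw [show j = i from Fin.ext (by omega)]
    push_cast
    ring
  · have hsup : (j : ℕ) = i + 1 := by omega
    have harg : ((J : ℝ) + (((i : ℤ) - J : ℤ) : ℝ) + 1) * (J - (((i : ℤ) - J : ℤ) : ℝ)) =
        ((i + 1 : ℕ) : ℝ) * ((2 * J - i : ℕ) : ℝ) := by
      rw [Nat.cast_sub (by omega)]
      push_cast
      ring
    have hsqrt := congrArg ((↑) : ℝ → ℂ) (Real.sqrt_mul_sqrt_choose_succ (2 * J) i)
    rw [harg, hsup]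
    rw [Nat.cast_sub (by omega : (i : ℕ) ≤ 2 * J)] at hsqrt ⊢
    push_cast at hsqrt ⊢
    linear_combination (-((x : ℂ) + I * y) / 4) * hsqrt
  · simp

theorem charpoly_BdotL (J : ℕ) (x y z : ℝ) :
    (BdotL J x y z).charpoly =
      (spinMatrix J (-((x : ℂ) - I * y) / 4) z (-((x : ℂ) + I * y) / 4)).charpoly := by
  refine Matrix.charpoly_eq_of_mul_eq_mul (Q := Matrix.diagonal fun i => (√((2 * J).choose i) : ℂ)⁻¹)
    ?_ (BdotL_mul_diagonal J x y z)
  rw [Matrix.diagonal_mul_diagonal, ← Matrix.diagonal_one]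
  congr 1
  funext i
  have hpos : 0 < (2 * J).choose i := Nat.choose_pos (by omega)
  exact inv_mul_cancel₀ (ofReal_ne_zero.2 (by positivity))

theorem Fin.prod_univ_eq_prod_Icc_sub {M : Type*} [CommMonoid M] (f : ℤ → M) (J : ℕ) :
    ∏ k : Fin (2 * J + 1), f (k - J) = ∏ m ∈ Finset.Icc (-J : ℤ) J, f m := by
  refine Finset.prod_bij (fun k _ => (k : ℤ) - J) (fun k _ => ?_) (fun k _ l _ h => ?_)
    (fun m hm => ?_) (fun _ _ => rfl)
  · simp only [Finset.mem_Icc]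
    omega
  · exact Fin.ext (by omega)
  · rw [Finset.mem_Icc] at hm
    exact ⟨⟨(m + J).toNat, by omega⟩, Finset.mem_univ _, by simp; omega⟩

theorem Finset.prod_Icc_neg_self_comp_neg {M : Type*} [CommMonoid M] (f : ℤ → M) (a : ℤ) :
    ∏ m ∈ Finset.Icc (-a) a, f (-m) = ∏ m ∈ Finset.Icc (-a) a, f m :=
  Finset.prod_nbij' (- ·) (- ·) (by simp; omega) (by simp; omega) (by simp) (by simp) (by simp)

theorem exists_isRoot_quadratic {k : Type*} [Field k] [IsAlgClosed k] {a b c : k}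
    (h : a = 0 → c = 0) : ∃ r, (C a * X ^ 2 + C b * X + C c).IsRoot r := by
  by_cases ha : a = 0
  · exact ⟨0, by simp [ha, h ha]⟩
  · exact IsAlgClosed.exists_root _ (by rw [degree_quadratic ha]; decide)

theorem charpoly_BdotL_eq_prod_Icc (J : ℕ) (x y z : ℝ) :
    ∃ μ : ℂ, μ ^ 2 = (√(z ^ 2 + (x ^ 2 + y ^ 2) / 4) : ℂ) ^ 2 ∧
      (BdotL J x y z).charpoly = ∏ m ∈ Finset.Icc (-J : ℤ) J, (X - C (m * μ)) := by
  set α : ℂ := -((x : ℂ) + I * y) / 4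
  set β : ℂ := -((x : ℂ) - I * y) / 4
  obtain ⟨c, hc⟩ : ∃ c, (C (-α) * X ^ 2 + C (z : ℂ) * X + C β).IsRoot c := by
    refine exists_isRoot_quadratic fun h => ?_
    have hxy : (x : ℂ) + I * y = 0 := by linear_combination 4 * h
    obtain ⟨rfl, rfl⟩ : x = 0 ∧ y = 0 := by simpa [Complex.ext_iff] using hxy
    simp [β]
  refine ⟨z - 2 * α * c, ?_, ?_⟩
  · have hroot : -α * (c * c) + z * c + β = 0 := by
      simp only [IsRoot, eval_add, eval_mul, eval_C, eval_pow, eval_X] at hc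
      linear_combination hc
    have hdisc := discrim_eq_sq_of_quadratic_eq_zero hroot
    rw [discrim] at hdisc
    rw [← ofReal_pow, Real.sq_sqrt (by positivity)]
    push_cast
    linear_combination -hdisc - (y : ℂ) ^ 2 / 4 * I_sq
  · rw [charpoly_BdotL, charpoly_spinMatrix J β (z : ℂ) α hc, ← Fin.prod_univ_eq_prod_Icc_sub]
    refine Finset.prod_congr rfl fun k _ => ?_
    congr 2
    push_cast
    ring

theorem stmt3_general (J : ℕ) (x y z : ℝ) :
    (BdotL J x y z).charpoly =
      ∏ M ∈ Finset.Icc (-(J : ℤ)) (J : ℤ),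
        (X - C ((M : ℂ) * Real.sqrt (z ^ 2 + (x ^ 2 + y ^ 2) / 4))) := by
  obtain ⟨μ, hμ, hcharpoly⟩ := charpoly_BdotL_eq_prod_Icc J x y z
  rw [hcharpoly]
  rcases sq_eq_sq_iff_eq_or_eq_neg.1 hμ with rfl | rfl
  · rfl
  · rw [← Finset.prod_Icc_neg_self_comp_neg]
    simp

/-- the characteristic polynomial of the tridiagonal matrix `BdotL J x y z`
equals `∏_{M=-J}^{J} (λ - M·|B|)` with `|B| = √(z²+(x²+y²)/4)`. -/
theorem stmt3 (J : ℕ) (hJ : 1 ≤ J) (x y z : ℝ) :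
    (BdotL J x y z).charpoly =
      ∏ M ∈ Finset.Icc (-(J : ℤ)) (J : ℤ),
        (X - C ((M : ℂ) * Real.sqrt (z ^ 2 + (x ^ 2 + y ^ 2) / 4))) :=
  stmt3_general J x y z
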